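/- No subset of 𝕋² satisfying the Helson measure inequality (with some constant C) can contain a product X₁ × X₂ where X₁ and X₂ are infinite subsets of 𝕋. -/

import Mathlib

/-!
Pick distinct points `x₀, …, x_{n-1}` in `X₁` and `y₀, …, y_{n-1}` in `X₂` and put the mass
`e^{2πi jk/n}` at `(x_j, y_k)`. This measure has total variation `n²`, while each of its
Fourier coefficients is `uᵀ F v` for the discrete Fourier matrix `F` and unimodular vectors
`u, v`. Since `F / √n` is unitary, Cauchy–Schwarz bounds `|uᵀ F v|` by `n √n`, so the
Helson inequality gives `n² ≤ |C| (2π)⁻² n √n`, which fails for large `n`.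
-/

open MeasureTheory Complex

/-- `E ⊆ 𝕋²` satisfies the Helson measure inequality with constant `C` if every
finite complex measure supported on `E` (encoded by its polar decomposition:
total variation measure `ν` and a unimodular density `f`) satisfies
`‖μ‖ ≤ C · sup_{λ ∈ ℤ²} |μ̂(λ)|`, where
`μ̂(λ) = (2π)^{-2} ∫ e^{-i(λ₁t₁ + λ₂t₂)} f(t) dν(t)`. -/
def SatisfiesHelsonIneq (C : ℝ)
    (E : Set (AddCircle (2 * Real.pi) × AddCircle (2 * Real.pi))) : Prop :=
  ∀ (ν : Measure (AddCircle (2 * Real.pi) × AddCircle (2 * Real.pi)))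
    (f : AddCircle (2 * Real.pi) × AddCircle (2 * Real.pi) → ℂ),
    IsFiniteMeasure ν → ν Eᶜ = 0 →
    AEStronglyMeasurable f ν → (∀ᵐ t ∂ν, ‖f t‖ = 1) →
    (ν Set.univ).toReal ≤ C * ⨆ l : ℤ × ℤ,
      ((2 * Real.pi) ^ 2 : ℝ)⁻¹ *
        ‖∫ t, fourier (-l.1) t.1 * fourier (-l.2) t.2 * f t ∂ν‖

namespace AddChar

variable {R : Type*} [CommRing R] [Fintype R] {ψ : AddChar R ℂ}

theorem sum_sq_norm_sum_mul_mulShift (hψ : ψ.IsPrimitive) (v : R → ℂ) :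
    ∑ j, ‖∑ k, ψ (j * k) * v k‖ ^ 2 = Fintype.card R * ∑ k, ‖v k‖ ^ 2 := by
  classical
  have hchar (j k k' : R) : ψ (j * k) * starRingEnd ℂ (ψ (j * k')) = ψ (j * (k - k')) := by
    rw [← map_neg_eq_conj, ← map_add_eq_mul, mul_sub, sub_eq_add_neg]
  apply Complex.ofReal_injective
  push_cast
  calc ∑ j, (‖∑ k, ψ (j * k) * v k‖ : ℂ) ^ 2
      = ∑ j, ∑ k, ∑ k', ψ (j * k) * starRingEnd ℂ (ψ (j * k')) * (v k * starRingEnd ℂ (v k')) := by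
        refine Finset.sum_congr rfl fun j _ => ?_
        rw [← Complex.mul_conj', map_sum, Finset.sum_mul_sum]
        exact Finset.sum_congr rfl fun k _ => Finset.sum_congr rfl fun k' _ => by
          rw [map_mul (starRingEnd ℂ)]; ring
    _ = ∑ k, ∑ k', (∑ j, ψ (j * (k - k'))) * (v k * starRingEnd ℂ (v k')) := by
        simp only [hchar, Finset.sum_mul]
        rw [Finset.sum_comm]
        exact Finset.sum_congr rfl fun k _ => Finset.sum_comm
    _ = Fintype.card R * ∑ k, (‖v k‖ : ℂ) ^ 2 := by
        simp [sum_mulShift _ hψ, sub_eq_zero, Complex.mul_conj', Finset.mul_sum]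

theorem norm_sum_mul_mulShift_mul_le (hψ : ψ.IsPrimitive) {u v : R → ℂ}
    (hu : ∀ j, ‖u j‖ ≤ 1) (hv : ∀ k, ‖v k‖ ≤ 1) :
    ‖∑ j, ∑ k, u j * v k * ψ (j * k)‖ ≤ Fintype.card R * √(Fintype.card R) := by
  set S : R → ℂ := fun j => ∑ k, ψ (j * k) * v k
  have hsum_le : ‖∑ j, ∑ k, u j * v k * ψ (j * k)‖ ≤ ∑ j, ‖S j‖ := by
    refine (norm_sum_le _ _).trans (Finset.sum_le_sum fun j _ => ?_)
    simp_rw [S, mul_assoc, mul_comm (v _), ← Finset.mul_sum, norm_mul]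
    exact mul_le_of_le_one_left (norm_nonneg _) (hu j)
  have hsq : (∑ j, ‖S j‖) ^ 2 ≤ Fintype.card R * (Fintype.card R * Fintype.card R) := by
    calc (∑ j, ‖S j‖) ^ 2 ≤ Fintype.card R * ∑ j, ‖S j‖ ^ 2 := sq_sum_le_card_mul_sum_sq
      _ = Fintype.card R * (Fintype.card R * ∑ k, ‖v k‖ ^ 2) := by
        rw [sum_sq_norm_sum_mul_mulShift hψ]
      _ ≤ Fintype.card R * (Fintype.card R * Fintype.card R) := by
        gcongr
        calc ∑ k, ‖v k‖ ^ 2 ≤ ∑ _k : R, (1 : ℝ) :=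
              Finset.sum_le_sum fun k _ => pow_le_one₀ (norm_nonneg _) (hv k)
          _ = Fintype.card R := by simp
  refine hsum_le.trans ?_
  have hcard : (Fintype.card R : ℝ) * √(Fintype.card R)
      = √(Fintype.card R * (Fintype.card R * Fintype.card R)) := by
    rw [Real.sqrt_mul' _ (by positivity), Real.sqrt_mul_self (by positivity), mul_comm]
  exact hcard ▸ Real.le_sqrt_of_sq_le hsq

end AddChar

theorem Set.Infinite.exists_injective_of_finite {α ι : Type*} [Finite ι] {s : Set α}
    (hs : s.Infinite) : ∃ f : ι → s, Function.Injective f :=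
  ⟨hs.natEmbedding s ∘ Fin.val ∘ Finite.equivFin ι,
    (hs.natEmbedding s).injective.comp (Fin.val_injective.comp (Finite.equivFin ι).injective)⟩

section SumDirac

variable {X ι : Type*} [MeasurableSpace X] [MeasurableSingletonClass X] [Countable ι] {x : ι → X}

theorem ae_sum_dirac_iff {p : X → Prop} :
    (∀ᵐ t ∂Measure.sum fun i => Measure.dirac (x i), p t) ↔ ∀ i, p (x i) := by
  simp [Filter.Eventually, Measure.ae_sum_eq, ae_dirac_eq]

theorem integral_sum_dirac_of_fintype [Fintype ι] {E : Type*} [NormedAddCommGroup E]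
    [NormedSpace ℝ E] [FiniteDimensional ℝ E] (f : X → E) :
    ∫ t, f t ∂(Measure.sum fun i => Measure.dirac (x i)) = ∑ i, f (x i) := by
  simpa using integral_sum_dirac (f := f) (x := x) (c := fun _ => 1) (fun _ => ENNReal.one_ne_top)

end SumDirac

theorem SatisfiesHelsonIneq.card_le {C : ℝ}
    {E : Set (AddCircle (2 * Real.pi) × AddCircle (2 * Real.pi))} (hE : SatisfiesHelsonIneq C E)
    {ι : Type*} [Fintype ι]
    {a : ι → AddCircle (2 * Real.pi) × AddCircle (2 * Real.pi)} (ha : Function.Injective a)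
    (haE : ∀ i, a i ∈ E) {w : ι → ℂ} (hw : ∀ i, ‖w i‖ = 1) {B : ℝ}
    (hB : ∀ l : ℤ × ℤ, ‖∑ i, fourier (-l.1) (a i).1 * fourier (-l.2) (a i).2 * w i‖ ≤ B) :
    (Fintype.card ι : ℝ) ≤ |C| * (((2 * Real.pi) ^ 2 : ℝ)⁻¹ * B) := by
  set ν := Measure.sum fun i => Measure.dirac (a i)
  set f := Function.extend a w 1
  have hfa : ∀ i, f (a i) = w i := ha.extend_apply w 1
  have hfinite : IsFiniteMeasure ν := ⟨by simp [ν]⟩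
  have hsupport : ν Eᶜ = 0 := ae_sum_dirac_iff.mpr haE
  have hmeas : AEStronglyMeasurable f ν :=
    aestronglyMeasurable_sum_measure_iff.mpr fun _ => aestronglyMeasurable_dirac
  have hunimod : ∀ᵐ t ∂ν, ‖f t‖ = 1 := ae_sum_dirac_iff.mpr fun i => (hfa i).symm ▸ hw i
  have hsup_nonneg : 0 ≤ ⨆ l : ℤ × ℤ,
      ((2 * Real.pi) ^ 2 : ℝ)⁻¹ * ‖∫ t, fourier (-l.1) t.1 * fourier (-l.2) t.2 * f t ∂ν‖ :=
    Real.iSup_nonneg fun _ => by positivity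
  have hsup_le : (⨆ l : ℤ × ℤ,
      ((2 * Real.pi) ^ 2 : ℝ)⁻¹ * ‖∫ t, fourier (-l.1) t.1 * fourier (-l.2) t.2 * f t ∂ν‖)
      ≤ ((2 * Real.pi) ^ 2 : ℝ)⁻¹ * B := by
    refine ciSup_le fun l => mul_le_mul_of_nonneg_left ?_ (by positivity)
    simpa only [ν, integral_sum_dirac_of_fintype, hfa] using hB l
  calc (Fintype.card ι : ℝ) = (ν Set.univ).toReal := by simp [ν]
    _ ≤ C * ⨆ l : ℤ × ℤ,
      ((2 * Real.pi) ^ 2 : ℝ)⁻¹ * ‖∫ t, fourier (-l.1) t.1 * fourier (-l.2) t.2 * f t ∂ν‖ :=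
        hE ν f hfinite hsupport hmeas hunimod
    _ ≤ |C| * (((2 * Real.pi) ^ 2 : ℝ)⁻¹ * B) :=
        (mul_le_mul_of_nonneg_right (le_abs_self C) hsup_nonneg).trans
          (mul_le_mul_of_nonneg_left hsup_le (abs_nonneg C))

theorem SatisfiesHelsonIneq.card_mul_card_le {C : ℝ}
    {E : Set (AddCircle (2 * Real.pi) × AddCircle (2 * Real.pi))} (hE : SatisfiesHelsonIneq C E)
    {R : Type*} [CommRing R] [Fintype R] {ψ : AddChar R ℂ} (hψ : ψ.IsPrimitive)
    {x y : R → AddCircle (2 * Real.pi)} (hx : Function.Injective x) (hy : Function.Injective y)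
    (hxy : ∀ j k, (x j, y k) ∈ E) :
    (Fintype.card R : ℝ) * Fintype.card R
      ≤ |C| * ((2 * Real.pi) ^ 2 : ℝ)⁻¹ * (Fintype.card R * √(Fintype.card R)) := by
  have hcard := hE.card_le (a := fun p : R × R => (x p.1, y p.2))
    (fun p q h => Prod.ext (hx (congrArg Prod.fst h)) (hy (congrArg Prod.snd h)))
    (fun p => hxy p.1 p.2) (w := fun p => ψ (p.1 * p.2)) (fun _ => AddChar.norm_apply _ _)
    fun l => by
      simpa only [Fintype.sum_prod_type] using
        AddChar.norm_sum_mul_mulShift_mul_le hψ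
          (fun _ => by rw [fourier_apply, Circle.norm_coe])
          (fun _ => by rw [fourier_apply, Circle.norm_coe])
  simpa only [Fintype.card_prod, Nat.cast_mul, mul_assoc] using hcard

theorem no_infinite_product_in_helson_set_general
    (E : Set (AddCircle (2 * Real.pi) × AddCircle (2 * Real.pi)))
    (C : ℝ) (hHelson : SatisfiesHelsonIneq C E)
    (X₁ X₂ : Set (AddCircle (2 * Real.pi)))
    (hX₁ : X₁.Infinite) (hX₂ : X₂.Infinite)
    (hprod : X₁ ×ˢ X₂ ⊆ E) : False := by
  set K := |C| * ((2 * Real.pi) ^ 2 : ℝ)⁻¹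
  obtain ⟨n, hn⟩ := exists_nat_gt (K ^ 2)
  have hn_pos : (0 : ℝ) < n := (sq_nonneg K).trans_lt hn
  have : NeZero n := ⟨by exact_mod_cast hn_pos.ne'⟩
  obtain ⟨x, hx⟩ := hX₁.exists_injective_of_finite (ι := ZMod n)
  obtain ⟨y, hy⟩ := hX₂.exists_injective_of_finite (ι := ZMod n)
  have hbound := hHelson.card_mul_card_le (ZMod.isPrimitive_stdAddChar n)
    (Subtype.val_injective.comp hx) (Subtype.val_injective.comp hy)
    fun j k => hprod ⟨(x j).2, (y k).2⟩
  rw [ZMod.card] at hbound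
  have hK : K < √n := (Real.lt_sqrt (by positivity)).mpr hn
  have : (n : ℝ) * n < n * n := calc
    (n : ℝ) * n ≤ K * (n * √n) := hbound
    _ < √n * (n * √n) := by gcongr
    _ = n * n := by rw [mul_left_comm, Real.mul_self_sqrt hn_pos.le]
  exact lt_irrefl _ this

/-- No subset of `𝕋²` satisfying the Helson measure inequality (with some
constant `C > 0`) can contain a Cartesian product `X₁ × X₂` of two infinite
subsets of `𝕋`. -/
theorem no_infinite_product_in_helson_set
    (E : Set (AddCircle (2 * Real.pi) × AddCircle (2 * Real.pi)))
    (C : ℝ) (hC : 0 < C) (hHelson : SatisfiesHelsonIneq C E)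
    (X₁ X₂ : Set (AddCircle (2 * Real.pi)))
    (hX₁ : X₁.Infinite) (hX₂ : X₂.Infinite)
    (hprod : X₁ ×ˢ X₂ ⊆ E) : False :=
  no_infinite_product_in_helson_set_general E C hHelson X₁ X₂ hX₁ hX₂ hprod
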